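/- Let Ω ⊂ ℝ³ be open with smooth boundary having k mutually disjoint connected components ∂Ω₀,…,∂Ω_{k−1}. Let φ ∈ C_c^∞(Ω, ℝ³) satisfy curl φ = 0. Then there exist a smooth function u ∈ C^∞(closure Ω) and constants c₀ = 0, c₁,…,c_{k−1} ∈ ℝ such that ∇u = φ on Ω and u = c_i on ∂Ω_i. -/

import Mathlib

open MeasureTheory Topology Filter

noncomputable section

/-- Vectors in ℝ³. -/
abbrev V3 := Fin 3 → ℝ
/-- 3×3 tensors. -/
abbrev M3 := Fin 3 → Fin 3 → ℝ

/-- Levi-Civita symbol on `Fin 3`. -/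
def eps (i j k : Fin 3) : ℝ :=
  (((j : ℕ) : ℝ) - ((i : ℕ) : ℝ)) * (((k : ℕ) : ℝ) - ((i : ℕ) : ℝ)) *
    (((k : ℕ) : ℝ) - ((j : ℕ) : ℝ)) / 2

/-- Partial derivative `∂ᵢ g`. -/
def pd (i : Fin 3) (g : V3 → ℝ) (x : V3) : ℝ := fderiv ℝ g x (Pi.single i 1)

/-- Gradient of a scalar field. -/
def gradF (g : V3 → ℝ) (x : V3) : V3 := fun i => pd i g x

/-- Gradient (Jacobian matrix) of a vector field: `(∇u)_{ij} = ∂_j u_i`. -/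
def gradM (u : V3 → V3) (x : V3) : M3 := fun i j => pd j (fun y => u y i) x

/-- Hessian of a scalar field. -/
def hess (g : V3 → ℝ) (x : V3) : M3 := fun i j => pd i (fun y => pd j g y) x

/-- Curl of a vector field. -/
def curlV (v : V3 → V3) (x : V3) : V3 :=
  fun i => ∑ k, ∑ l, eps i k l * pd k (fun y => v y l) x

/-- Row-wise curl of a tensor field: `(curl A)_{ij} = ε_{jkl} ∂_k A_{il}`. -/
def curlT (A : V3 → M3) (x : V3) : M3 :=
  fun i j => ∑ k, ∑ l, eps j k l * pd k (fun y => A y i l) x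

/-- Divergence of a vector field. -/
def divV (v : V3 → V3) (x : V3) : ℝ := ∑ j, pd j (fun y => v y j) x

/-- Row-wise divergence of a tensor field: `(div A)_i = ∂_j A_{ij}`. -/
def divT (A : V3 → M3) (x : V3) : V3 := fun i => ∑ j, pd j (fun y => A y i j) x

/-- Euclidean dot product. -/
def dotV (a b : V3) : ℝ := ∑ i, a i * b i

/-- Frobenius inner product of tensors. -/
def frob (A B : M3) : ℝ := ∑ i, ∑ j, A i j * B i j

/-- Cross product of vectors. -/
def crossV (a b : V3) : V3 := fun i => ∑ k, ∑ l, eps i k l * a k * b l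

/-- `(x × A)_{ij} = ε_{ikl} x_k A_{lj}`. -/
def xcross (x : V3) (A : M3) : M3 := fun i j => ∑ k, ∑ l, eps i k l * x k * A l j

/-- Transpose. -/
def transp (A : M3) : M3 := fun i j => A j i

/-- Trace. -/
def trace3 (A : M3) : ℝ := ∑ i, A i i

/-- Symmetry of a tensor. -/
def isSym (A : M3) : Prop := ∀ i j, A i j = A j i

/-- Matrix-vector product. -/
def mulVec3 (A : M3) (v : V3) : V3 := fun i => ∑ j, A i j * v j

/-- Identity tensor. -/
def idM : M3 := fun i j => if i = j then (1 : ℝ) else 0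

/-- Euclidean norm. -/
def nrm (v : V3) : ℝ := Real.sqrt (∑ i, v i ^ 2)

/-- Unit normal of the level surface `{f = 0}`: normalized gradient of `f`. -/
def nvec (f : V3 → ℝ) (x : V3) : V3 := (nrm (gradF f x))⁻¹ • gradF f x

/-- Tangential projector `I - n ⊗ n`. -/
def projT (n : V3) : M3 := fun i j => (if i = j then (1 : ℝ) else 0) - n i * n j

/-- Surface (tangential) divergence of a vector field, given a unit-normal field `n`:
`div_S c = (δ_{ij} - n_i n_j) ∂_j c_i`. -/
def divS (n : V3 → V3) (c : V3 → V3) (x : V3) : ℝ :=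
  ∑ i, ∑ j, projT (n x) i j * pd j (fun y => c y i) x

/-- Row-wise surface divergence of a tensor field. -/
def divST (n : V3 → V3) (A : V3 → M3) (x : V3) : V3 :=
  fun i => ∑ j, ∑ k, projT (n x) j k * pd k (fun y => A y i j) x

/-- Twice the mean curvature with respect to `n` (sign convention `κ = -div_S n`). -/
def kappa (n : V3 → V3) (x : V3) : ℝ := -divS n n x

/-- Surface gradient of the normal (shape operator): `(∇_S n)_{ij} = (δ_{jk} - n_j n_k) ∂_k n_i`. -/
def gradSn (n : V3 → V3) (x : V3) : M3 :=
  fun i j => ∑ k, projT (n x) j k * pd k (fun y => n y i) x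

/-- Normal derivative `∂ψ/∂n = ⟨∇ψ, n⟩`. -/
def nder (n : V3 → V3) (g : V3 → ℝ) (x : V3) : ℝ := dotV (gradF g x) (n x)

/-- A scalar test function on `Ω`. -/
def IsTestS (Ω : Set V3) (g : V3 → ℝ) : Prop :=
  ContDiff ℝ (⊤ : ℕ∞) g ∧ HasCompactSupport g ∧ tsupport g ⊆ Ω

/-- A vector-valued test function on `Ω`. -/
def IsTestV (Ω : Set V3) (g : V3 → V3) : Prop :=
  ContDiff ℝ (⊤ : ℕ∞) g ∧ HasCompactSupport g ∧ tsupport g ⊆ Ω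

/-- A tensor-valued test function on `Ω`. -/
def IsTestM (Ω : Set V3) (g : V3 → M3) : Prop :=
  ContDiff ℝ (⊤ : ℕ∞) g ∧ HasCompactSupport g ∧ tsupport g ⊆ Ω

/-!
Since `φ` vanishes near `∂Ω`, `curl φ = 0` on all of `ℝ³`, so the Jacobian of `φ` is symmetric
everywhere and the 1-form `x ↦ ⟪φ x, ·⟫` is closed on the convex set `ℝ³`; the Poincaré lemma
gives a global smooth primitive `u`. Off `tsupport φ` we have `∇u = 0`, so `u` is constant on each
connected `Γ i ⊆ ∂Ω`, which misses the open set `Ω ⊇ tsupport φ`. Subtracting the value on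
`Γ 0` makes `c 0 = 0`.
-/

lemma IsPreconnected.eq_of_fderiv_eq_zero {E F : Type*} [NormedAddCommGroup E] [NormedSpace ℝ E]
    [NormedAddCommGroup F] [NormedSpace ℝ F] {f : E → F} {U S : Set E} (hU : IsOpen U)
    (hf : DifferentiableOn ℝ f U) (hf' : U.EqOn (fderiv ℝ f) 0) (hS : IsPreconnected S)
    (hSU : S ⊆ U) {x y : E} (hx : x ∈ S) (hy : y ∈ S) : f x = f y := by
  have hC := hS.subset_connectedComponentIn hx hSU
  exact (hU.connectedComponentIn).is_const_of_fderiv_eq_zero isPreconnected_connectedComponentIn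
    (hf.mono (connectedComponentIn_subset _ _)) (hf'.mono (connectedComponentIn_subset _ _))
    (hC hx) (hC hy)

lemma contDiff_infty_of_forall_hasFDerivAt {E F : Type*} [NormedAddCommGroup E]
    [NormedSpace ℝ E] [NormedAddCommGroup F] [NormedSpace ℝ F] {f : E → F}
    {f' : E → E →L[ℝ] F} (hf : ∀ x, HasFDerivAt f (f' x) x) (hf' : ContDiff ℝ (⊤ : ℕ∞) f') :
    ContDiff ℝ (⊤ : ℕ∞) f := by
  rw [contDiff_infty_iff_fderiv, funext fun x => (hf x).fderiv]
  exact ⟨fun x => (hf x).differentiableAt, hf'⟩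

def dotCLM : V3 →L[ℝ] V3 →L[ℝ] ℝ :=
  ∑ i, (ContinuousLinearMap.smulRightL ℝ V3 ℝ (ContinuousLinearMap.proj i)).comp
    (ContinuousLinearMap.proj i)

@[simp] lemma dotCLM_apply (a v : V3) : dotCLM a v = dotV a v := by
  simp [dotCLM, dotV, ContinuousLinearMap.smulRightL, mul_comm]

lemma gradF_eq_of_hasFDerivAt {u : V3 → ℝ} {a x : V3} (h : HasFDerivAt u (dotCLM a) x) :
    gradF u x = a := by
  funext i
  simp [gradF, pd, h.fderiv, dotV, Pi.single_apply]

lemma curlV_eq_zero_of_notMem_tsupport {φ : V3 → V3} {x : V3} (hx : x ∉ tsupport φ) :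
    curlV φ x = 0 := by
  have hpd : ∀ k l, pd k (fun z => φ z l) x = 0 := fun k l => by
    have hxl : x ∉ tsupport ((fun v : V3 => v l) ∘ φ) := fun h => hx (tsupport_comp_subset rfl φ h)
    rw [pd, show (fun z => φ z l) = (fun v : V3 => v l) ∘ φ from rfl,
      fderiv_of_notMem_tsupport (𝕜 := ℝ) hxl]
    rfl
  funext i
  simp [curlV, hpd]

lemma fderiv_apply_single_comm_of_curlV_eq_zero {φ : V3 → V3} {y : V3}
    (hφ : DifferentiableAt ℝ φ y) (hcurl : curlV φ y = 0) (i j : Fin 3) :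
    fderiv ℝ φ y (Pi.single j 1) i = fderiv ℝ φ y (Pi.single i 1) j := by
  have hpd : ∀ k l, pd k (fun z => φ z l) y = fderiv ℝ φ y (Pi.single k 1) l := fun k l => by
    rw [pd, fderiv_apply hφ]; rfl
  have h := fun m => congrFun hcurl m
  simp only [curlV, hpd, Pi.zero_apply, Fin.sum_univ_three, eps] at h
  have e0 := h 0
  have e1 := h 1
  have e2 := h 2
  norm_num at e0 e1 e2
  fin_cases i <;> fin_cases j <;> simp <;> linarith

lemma dotV_map_comm_of_apply_single_comm {A : V3 →L[ℝ] V3}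
    (hA : ∀ i j, A (Pi.single j 1) i = A (Pi.single i 1) j) (v w : V3) :
    dotV (A v) w = dotV (A w) v := by
  have expand : ∀ a b : V3, dotV (A a) b = ∑ i, ∑ j, a j * A (Pi.single j 1) i * b i := by
    intro a b
    conv_lhs => rw [← Finset.univ_sum_single a]
    simp only [dotV, map_sum, Finset.sum_apply, Finset.sum_mul]
    refine Finset.sum_congr rfl fun i _ => Finset.sum_congr rfl fun j _ => ?_
    have hsingle : (Pi.single j (a j) : V3) = a j • Pi.single j 1 := by
      ext m; simp [Pi.single_apply]
    rw [hsingle, map_smul, Pi.smul_apply, smul_eq_mul]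
  rw [expand, expand, Finset.sum_comm]
  refine Finset.sum_congr rfl fun i _ => Finset.sum_congr rfl fun j _ => ?_
  rw [hA]
  ring

lemma exists_forall_hasFDerivAt_dotCLM {φ : V3 → V3} (hφ : Differentiable ℝ φ)
    (hcurl : ∀ x, curlV φ x = 0) : ∃ u : V3 → ℝ, ∀ x, HasFDerivAt u (dotCLM (φ x)) x := by
  have hω : Differentiable ℝ fun x => dotCLM (φ x) := dotCLM.differentiable.comp hφ
  have hclosed : ∀ a ∈ Set.univ, ∀ v w : V3,
      fderiv ℝ (fun x => dotCLM (φ x)) a v w = fderiv ℝ (fun x => dotCLM (φ x)) a w v := by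
    intro a _ v w
    rw [fderiv_fun_comp a dotCLM.differentiableAt (hφ a)]
    simp only [ContinuousLinearMap.fderiv, ContinuousLinearMap.coe_comp, Function.comp_apply,
      dotCLM_apply]
    exact dotV_map_comm_of_apply_single_comm
      (fderiv_apply_single_comm_of_curlV_eq_zero (hφ a) (hcurl a)) v w
  obtain ⟨u, hu⟩ := convex_univ.exists_forall_hasFDerivAt_of_fderiv_symmetric isOpen_univ
    hω.differentiableOn hclosed
  exact ⟨u, fun x => hu x trivial⟩

theorem potential_constant_on_boundary_components_general
    (Ω : Set V3) (hΩ : IsOpen Ω)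
    (k : ℕ) (hk : 0 < k)
    (Γ : Fin k → Set V3)
    (hΓconn : ∀ i, IsConnected (Γ i))
    (hΓcover : frontier Ω = ⋃ i, Γ i)
    (φ : V3 → V3) (hφ : IsTestV Ω φ)
    (hcurl : ∀ x ∈ Ω, curlV φ x = 0) :
    ∃ (u : V3 → ℝ) (c : Fin k → ℝ),
      ContDiff ℝ (⊤ : ℕ∞) u ∧ c ⟨0, hk⟩ = 0 ∧
        (∀ x ∈ Ω, gradF u x = φ x) ∧
        ∀ i, ∀ x ∈ Γ i, u x = c i := by
  obtain ⟨hφsmooth, -, hφsupp⟩ := hφ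
  have hcurl_univ : ∀ x, curlV φ x = 0 := fun x => by
    by_cases hx : x ∈ Ω
    exacts [hcurl x hx, curlV_eq_zero_of_notMem_tsupport fun h => hx (hφsupp h)]
  obtain ⟨u, hu⟩ := exists_forall_hasFDerivAt_dotCLM (hφsmooth.differentiable (by simp)) hcurl_univ
  have hΓ : ∀ i, Γ i ⊆ (tsupport φ)ᶜ := fun i x hx hxφ => by
    have hxΩ : x ∈ Ω ∩ frontier Ω := ⟨hφsupp hxφ, hΓcover ▸ Set.mem_iUnion_of_mem i hx⟩
    rwa [hΩ.inter_frontier_eq] at hxΩ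
  have hflat : (tsupport φ)ᶜ.EqOn (fderiv ℝ u) 0 := fun x hx => by
    rw [(hu x).fderiv, image_eq_zero_of_notMem_tsupport hx, map_zero, Pi.zero_apply]
  let p i := (hΓconn i).nonempty.some
  refine ⟨fun x => u x - u (p ⟨0, hk⟩), fun i => u (p i) - u (p ⟨0, hk⟩),
    (contDiff_infty_of_forall_hasFDerivAt hu (dotCLM.contDiff.comp hφsmooth)).sub contDiff_const,
    sub_self _, fun x _ => gradF_eq_of_hasFDerivAt ((hu x).sub_const _), fun i x hx => ?_⟩
  rw [sub_left_inj]
  exact (hΓconn i).isPreconnected.eq_of_fderiv_eq_zero (isClosed_tsupport φ).isOpen_compl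
    (fun y _ => (hu y).differentiableAt.differentiableWithinAt) hflat (hΓ i) hx
    (hΓconn i).nonempty.some_mem

/-- A compactly supported smooth curl-free vector field on a bounded connected
open set `Ω`, whose boundary has `k` mutually disjoint connected components
`Γ 0, …, Γ (k-1)`, admits a smooth potential `u` with `∇u = φ` on `Ω` which is
constant on each boundary component, with the constant `c 0 = 0` on `Γ 0`. -/
theorem potential_constant_on_boundary_components
    (Ω : Set V3) (hΩ : IsOpen Ω) (hconn : IsConnected Ω)
    (hbdd : Bornology.IsBounded Ω)
    (k : ℕ) (hk : 0 < k)
    (Γ : Fin k → Set V3)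
    (hΓdisj : Pairwise (Function.onFun Disjoint Γ))
    (hΓconn : ∀ i, IsConnected (Γ i))
    (hΓcover : frontier Ω = ⋃ i, Γ i)
    (φ : V3 → V3) (hφ : IsTestV Ω φ)
    (hcurl : ∀ x ∈ Ω, curlV φ x = 0) :
    ∃ (u : V3 → ℝ) (c : Fin k → ℝ),
      ContDiff ℝ (⊤ : ℕ∞) u ∧ c ⟨0, hk⟩ = 0 ∧
        (∀ x ∈ Ω, gradF u x = φ x) ∧
        ∀ i, ∀ x ∈ Γ i, u x = c i :=
  potential_constant_on_boundary_components_general Ω hΩ k hk Γ hΓconn hΓcover φ hφ hcurl
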